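/- arXiv:nlin/0511007 — 3 statements merged into one kernel-verified Lean document; each statement's English description precedes it below -/
import Mathlib

section
/- For the vector field Y3ᵃ = (q3, q1, q2, p3, p1, p2) on ℝ⁶, the function Y3ᵃ(H) (the directional derivative of H along Y3ᵃ) equals (1/2)J2² − H, where J2 = p1 + p2 + p3. -/
open scoped BigOperators

/-- Partial derivative of a function on phase space ℝ⁶ in the i-th coordinate. -/
noncomputable def pd (i : Fin 6) (f : (Fin 6 → ℝ) → ℝ) (x : Fin 6 → ℝ) : ℝ :=
  fderiv ℝ f x (Pi.single i 1)

/-- Canonical Poisson bracket on ℝ⁶ with coordinates (q1,q2,q3,p1,p2,p3). -/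
noncomputable def pb (F G : (Fin 6 → ℝ) → ℝ) (x : Fin 6 → ℝ) : ℝ :=
  (pd 0 F x * pd 3 G x - pd 3 F x * pd 0 G x) +
  (pd 1 F x * pd 4 G x - pd 4 F x * pd 1 G x) +
  (pd 2 F x * pd 5 G x - pd 5 F x * pd 2 G x)

/-- Angular momentum components: L1 = q2 p3 − q3 p2, etc. -/
def L1 (x : Fin 6 → ℝ) : ℝ := x 1 * x 5 - x 2 * x 4
def L2 (x : Fin 6 → ℝ) : ℝ := x 2 * x 3 - x 0 * x 5
def L3 (x : Fin 6 → ℝ) : ℝ := x 0 * x 4 - x 1 * x 3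

/-- The Hamiltonian of the coupled oscillators with magnetic terms. -/
noncomputable def Ham (b k : ℝ) (x : Fin 6 → ℝ) : ℝ :=
  (1/2) * (x 3 ^ 2 + x 4 ^ 2 + x 5 ^ 2) + b * (L1 x + L2 x + L3 x) +
  (1/2) * (b ^ 2 + k) * ((x 1 - x 0) ^ 2 + (x 2 - x 1) ^ 2 + (x 0 - x 2) ^ 2)

/-- J2 = p1 + p2 + p3. -/
def J2 (x : Fin 6 → ℝ) : ℝ := x 3 + x 4 + x 5

/-- J3 = L1 + L2 + L3. -/
def J3 (x : Fin 6 → ℝ) : ℝ := L1 x + L2 x + L3 x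

def Y3a (x : Fin 6 → ℝ) : Fin 6 → ℝ := ![x 2, x 0, x 1, x 5, x 3, x 4]

/-!
The field `Y3a` is the linear vector field `x ↦ σ x`, where `σ` permutes the positions and the
momenta cyclically. Since `H` is a quadratic form, `Y3a(H) = dH(x)(σ x)` is again quadratic and
splits along the three pieces of `H`: the kinetic energy `T` gives `p · σ p = ½ J2² − T`, the
magnetic term gives `−b J3`, and the potential gives `−V`, because the three differences
`q2 − q1, q3 − q2, q1 − q3` sum to zero.
-/

theorem fderiv_Ham_apply (b k : ℝ) (x v : Fin 6 → ℝ) :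
    fderiv ℝ (Ham b k) x v =
      (x 3 * v 3 + x 4 * v 4 + x 5 * v 5) +
      b * ((v 1 * x 5 + x 1 * v 5 - (v 2 * x 4 + x 2 * v 4)) +
        (v 2 * x 3 + x 2 * v 3 - (v 0 * x 5 + x 0 * v 5)) +
        (v 0 * x 4 + x 0 * v 4 - (v 1 * x 3 + x 1 * v 3))) +
      (b ^ 2 + k) * ((x 1 - x 0) * (v 1 - v 0) + (x 2 - x 1) * (v 2 - v 1) +
        (x 0 - x 2) * (v 0 - v 2)) := by
  have coord (i : Fin 6) : fderiv ℝ (fun y : Fin 6 → ℝ => y i) x = ContinuousLinearMap.proj i :=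
    (hasFDerivAt_apply i x).fderiv
  unfold Ham L1 L2 L3
  simp (disch := fun_prop) only [fderiv_fun_add, fderiv_fun_sub, fderiv_fun_mul, fderiv_fun_pow,
    fderiv_const_apply, coord, add_apply, sub_apply, smul_apply, ContinuousLinearMap.proj_apply,
    zero_apply, smul_eq_mul, nsmul_eq_mul]
  ring

/-- The directional derivative of H along Y3ᵃ equals (1/2)J2² − H. -/
theorem stmt8 (b k : ℝ) (x : Fin 6 → ℝ) :
    fderiv ℝ (Ham b k) x (Y3a x) = (1/2) * (J2 x)^2 - Ham b k x := by
  have kinetic : x 3 * x 5 + x 4 * x 3 + x 5 * x 4 =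
      (1/2) * J2 x ^ 2 - (1/2) * (x 3 ^ 2 + x 4 ^ 2 + x 5 ^ 2) := by
    rw [J2]; ring
  have magnetic : (x 0 * x 5 + x 1 * x 4 - (x 1 * x 4 + x 2 * x 3)) +
      (x 1 * x 3 + x 2 * x 5 - (x 2 * x 5 + x 0 * x 4)) +
      (x 2 * x 4 + x 0 * x 3 - (x 0 * x 3 + x 1 * x 5)) = -J3 x := by
    rw [J3, L1, L2, L3]; ring
  have potential : (x 1 - x 0) * (x 0 - x 2) + (x 2 - x 1) * (x 1 - x 0) +
      (x 0 - x 2) * (x 2 - x 1) =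
      -(1/2) * ((x 1 - x 0) ^ 2 + (x 2 - x 1) ^ 2 + (x 0 - x 2) ^ 2) := by
    ring
  rw [fderiv_Ham_apply]
  simp only [Y3a, Matrix.cons_val]
  rw [Ham, ← J3]
  linear_combination kinetic + b * magnetic + (b ^ 2 + k) * potential
end

section
/- The function T1 = q1 + q2 + q3 is a master symmetry generator of degree 1 for the Hamiltonian flow: Γ_H(T1) = J2 ≠ 0 in general, but Γ_H(Γ_H(T1)) = Γ_H(J2) = 0, i.e., the second time derivative of T1 along the flow vanishes. -/
/-! Since `T1` and `J2` are linear, `{T1, G}` and `{J2, G}` are the derivatives of `G` along the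
diagonal momentum direction `(0,0,0,1,1,1)` and (up to sign) the diagonal position direction
`(1,1,1,0,0,0)`. Translating the positions along the diagonal leaves `H` unchanged: the potential
only sees differences `qᵢ - qⱼ`, and `L1 + L2 + L3 = (q × p) · (1,1,1)` changes by
`((1,1,1) × p) · (1,1,1) = 0`. Hence `{J2, H} = 0`. Translating the momenta by `t (1,1,1)` changes
`H` by `t J2 + 3t²/2`, because `(q × (1,1,1)) · (1,1,1) = 0`, so `{T1, H} = J2`. -/

open scoped BigOperators

/-- T1 = q1 + q2 + q3. -/
def T1 (x : Fin 6 → ℝ) : ℝ := x 0 + x 1 + x 2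

section LineDerivative

variable {E F : Type*} [NormedAddCommGroup E] [NormedSpace ℝ E]
  [NormedAddCommGroup F] [NormedSpace ℝ F]

theorem fderiv_apply_eq_of_hasLineDerivAt {f : E → F} {x v : E} {f' : F}
    (hf : DifferentiableAt ℝ f x) (h : HasLineDerivAt ℝ f f' x v) : fderiv ℝ f x v = f' := by
  rw [← hf.lineDeriv_eq_fderiv, h.lineDeriv]

-- No differentiability hypothesis is needed: where `f` is not differentiable, `fderiv` is `0`.
theorem fderiv_apply_eq_zero_of_forall_add_smul {f : E → F} {x v : E}
    (h : ∀ t : ℝ, f (x + t • v) = f x) : fderiv ℝ f x v = 0 := by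
  by_cases hf : DifferentiableAt ℝ f x
  · refine fderiv_apply_eq_of_hasLineDerivAt hf ?_
    simpa only [HasLineDerivAt, h] using hasDerivAt_const (0 : ℝ) (f x)
  · simp [fderiv_zero_of_not_differentiableAt hf]

end LineDerivative

def qShift : Fin 6 → ℝ := ![1, 1, 1, 0, 0, 0]

def pShift : Fin 6 → ℝ := ![0, 0, 0, 1, 1, 1]

theorem pd_of_hasFDerivAt {f : (Fin 6 → ℝ) → ℝ} {L : (Fin 6 → ℝ) →L[ℝ] ℝ} {x : Fin 6 → ℝ}
    (h : HasFDerivAt f L x) (i : Fin 6) : pd i f x = L (Pi.single i 1) := by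
  rw [pd, h.fderiv]

theorem pd_add_pd_add_pd_eq_fderiv_qShift (f : (Fin 6 → ℝ) → ℝ) (x : Fin 6 → ℝ) :
    pd 0 f x + pd 1 f x + pd 2 f x = fderiv ℝ f x qShift := by
  have : qShift = Pi.single 0 1 + Pi.single 1 1 + Pi.single 2 1 := by
    ext i; fin_cases i <;> simp [qShift]
  simp only [pd, this, map_add]

theorem pd_add_pd_add_pd_eq_fderiv_pShift (f : (Fin 6 → ℝ) → ℝ) (x : Fin 6 → ℝ) :
    pd 3 f x + pd 4 f x + pd 5 f x = fderiv ℝ f x pShift := by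
  have : pShift = Pi.single 3 1 + Pi.single 4 1 + Pi.single 5 1 := by
    ext i; fin_cases i <;> simp [pShift]
  simp only [pd, this, map_add]

theorem pd_T1 (i : Fin 6) (x : Fin 6 → ℝ) : pd i T1 x = T1 (Pi.single i 1) :=
  pd_of_hasFDerivAt
    (((hasFDerivAt_apply 0 x).add (hasFDerivAt_apply 1 x)).add (hasFDerivAt_apply 2 x)) i

theorem pd_J2 (i : Fin 6) (x : Fin 6 → ℝ) : pd i J2 x = J2 (Pi.single i 1) :=
  pd_of_hasFDerivAt
    (((hasFDerivAt_apply 3 x).add (hasFDerivAt_apply 4 x)).add (hasFDerivAt_apply 5 x)) i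

theorem pb_T1 (G : (Fin 6 → ℝ) → ℝ) (x : Fin 6 → ℝ) : pb T1 G x = fderiv ℝ G x pShift := by
  rw [← pd_add_pd_add_pd_eq_fderiv_pShift]
  simp [pb, pd_T1, T1]

theorem pb_J2 (G : (Fin 6 → ℝ) → ℝ) (x : Fin 6 → ℝ) : pb J2 G x = -fderiv ℝ G x qShift := by
  rw [← pd_add_pd_add_pd_eq_fderiv_qShift]
  simp [pb, pd_J2, J2, add_comm]

theorem differentiable_Ham (b k : ℝ) : Differentiable ℝ (Ham b k) := by
  unfold Ham L1 L2 L3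
  fun_prop

theorem Ham_add_smul_qShift (b k t : ℝ) (x : Fin 6 → ℝ) :
    Ham b k (x + t • qShift) = Ham b k x := by
  simp only [Ham, L1, L2, L3, qShift, Pi.add_apply, Pi.smul_apply, smul_eq_mul]
  simp only [Matrix.cons_val, mul_one, mul_zero, add_zero]
  ring

theorem Ham_add_smul_pShift (b k t : ℝ) (x : Fin 6 → ℝ) :
    Ham b k (x + t • pShift) = Ham b k x + J2 x * t + 3 / 2 * t ^ 2 := by
  simp only [Ham, L1, L2, L3, J2, pShift, Pi.add_apply, Pi.smul_apply, smul_eq_mul]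
  simp only [Matrix.cons_val, mul_one, mul_zero, add_zero]
  ring

theorem pb_T1_Ham (b k : ℝ) (x : Fin 6 → ℝ) : pb T1 (Ham b k) x = J2 x := by
  rw [pb_T1]
  refine fderiv_apply_eq_of_hasLineDerivAt (differentiable_Ham b k x) ?_
  have h := ((hasDerivAt_id (0 : ℝ)).const_mul (J2 x)).add
    (((hasDerivAt_id (0 : ℝ)).pow 2).const_mul (3 / 2 : ℝ))
  simpa [HasLineDerivAt, Ham_add_smul_pShift, add_assoc] using h.const_add (Ham b k x)

theorem pb_J2_Ham (b k : ℝ) (x : Fin 6 → ℝ) : pb J2 (Ham b k) x = 0 := by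
  rw [pb_J2, fderiv_apply_eq_zero_of_forall_add_smul (fun t => Ham_add_smul_qShift b k t x),
    neg_zero]

/-- T1 is a master-symmetry generator of degree 1: Γ_H(T1) = {T1,H} = J2 ≠ 0
in general, but Γ_H(Γ_H(T1)) = {J2,H} = 0. -/
theorem stmt12 :
    (∀ (b k : ℝ) (x : Fin 6 → ℝ), pb T1 (Ham b k) x = J2 x) ∧
    (∃ x : Fin 6 → ℝ, J2 x ≠ 0) ∧
    (∀ (b k : ℝ) (x : Fin 6 → ℝ), pb (fun y => pb T1 (Ham b k) y) (Ham b k) x = 0) := by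
  refine ⟨pb_T1_Ham, ⟨fun _ => 1, by norm_num [J2]⟩, fun b k x => ?_⟩
  simpa only [pb_T1_Ham] using pb_J2_Ham b k x
end

section
/- If k + b² = 0, then the function J4 = L1(p2 − p3) + L2(p3 − p1) + L3(p1 − p2) is a constant of motion for H: {H, J4} = 0, where Li are the angular momentum components. -/
open scoped BigOperators

/-- J4 = L1(p2−p3) + L2(p3−p1) + L3(p1−p2). -/
def J4w (x : Fin 6 → ℝ) : ℝ :=
  L1 x * (x 4 - x 5) + L2 x * (x 5 - x 3) + L3 x * (x 3 - x 4)

/-! At `k = -b²` the potential vanishes and `H = ½|p|² + b n·L` with `n = (1,1,1)`. The kinetic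
part commutes with `p` and with `L`, while `n·L` generates rotations about `n`; hence
`{H, p} = b p × n` and `{H, L} = b L × n`. Since `J4 = L·(p × n)`, the Leibniz rule gives
`{H, J4} = b ((L × n)·(p × n) + L·((p × n) × n))`, and the two terms cancel because both equal
`±(3 L·p − (L·n)(p·n))`. -/

section PartialDerivative

variable {f g : (Fin 6 → ℝ) → ℝ} {x : Fin 6 → ℝ} (i : Fin 6)

theorem pd_coord (j : Fin 6) : pd i (fun y => y j) x = (Pi.single i 1 : Fin 6 → ℝ) j :=
  DFunLike.congr_fun (ContinuousLinearMap.proj (R := ℝ) (φ := fun _ : Fin 6 => ℝ) j).fderiv _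

theorem pd_const (c : ℝ) : pd i (fun _ => c) x = 0 := by
  simp [pd]

theorem pd_add (hf : DifferentiableAt ℝ f x) (hg : DifferentiableAt ℝ g x) :
    pd i (fun y => f y + g y) x = pd i f x + pd i g x := by
  simp [pd, fderiv_fun_add hf hg]

theorem pd_sub (hf : DifferentiableAt ℝ f x) (hg : DifferentiableAt ℝ g x) :
    pd i (fun y => f y - g y) x = pd i f x - pd i g x := by
  simp [pd, fderiv_fun_sub hf hg]

theorem pd_mul (hf : DifferentiableAt ℝ f x) (hg : DifferentiableAt ℝ g x) :
    pd i (fun y => f y * g y) x = pd i f x * g x + f x * pd i g x := by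
  simp only [pd, fderiv_fun_mul hf hg, add_apply, smul_apply, smul_eq_mul]
  ring

theorem pd_pow (hf : DifferentiableAt ℝ f x) (n : ℕ) :
    pd i (fun y => f y ^ n) x = n * f x ^ (n - 1) * pd i f x := by
  simp [pd, fderiv_fun_pow n hf]

end PartialDerivative

section PoissonBracket

variable {F G K : (Fin 6 → ℝ) → ℝ} {x : Fin 6 → ℝ}

theorem pb_add_right (hG : DifferentiableAt ℝ G x) (hK : DifferentiableAt ℝ K x) :
    pb F (fun y => G y + K y) x = pb F G x + pb F K x := by
  simp only [pb, pd_add _ hG hK]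
  ring

theorem pb_sub_right (hG : DifferentiableAt ℝ G x) (hK : DifferentiableAt ℝ K x) :
    pb F (fun y => G y - K y) x = pb F G x - pb F K x := by
  simp only [pb, pd_sub _ hG hK]
  ring

theorem pb_mul_right (hG : DifferentiableAt ℝ G x) (hK : DifferentiableAt ℝ K x) :
    pb F (fun y => G y * K y) x = pb F G x * K x + G x * pb F K x := by
  simp only [pb, pd_mul _ hG hK]
  ring

end PoissonBracket

@[fun_prop]
theorem differentiable_L1 : Differentiable ℝ L1 := by
  unfold L1; fun_prop

@[fun_prop]
theorem differentiable_L2 : Differentiable ℝ L2 := by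
  unfold L2; fun_prop

@[fun_prop]
theorem differentiable_L3 : Differentiable ℝ L3 := by
  unfold L3; fun_prop

theorem Ham_neg_sq (b : ℝ) :
    Ham b (-b ^ 2) = fun y => (1 / 2) * (y 3 ^ 2 + y 4 ^ 2 + y 5 ^ 2) + b * J3 y := by
  funext y
  simp [Ham, J3]

theorem pb_Ham_neg_sq (b : ℝ) (G : (Fin 6 → ℝ) → ℝ) (x : Fin 6 → ℝ) :
    pb (Ham b (-b ^ 2)) G x =
      b * ((x 4 - x 5) * pd 3 G x + (x 5 - x 3) * pd 4 G x + (x 3 - x 4) * pd 5 G x) -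
        ((x 3 + b * (x 2 - x 1)) * pd 0 G x + (x 4 + b * (x 0 - x 2)) * pd 1 G x +
          (x 5 + b * (x 1 - x 0)) * pd 2 G x) := by
  rw [Ham_neg_sq]
  unfold J3 L1 L2 L3
  simp (disch := fun_prop) only [pb, pd_add, pd_sub, pd_mul, pd_const, pd_pow, pd_coord,
    Pi.single_apply, Fin.reduceEq, reduceIte]
  ring

section BracketsWithHam

variable (b : ℝ) (x : Fin 6 → ℝ)

theorem pb_Ham_p1 : pb (Ham b (-b ^ 2)) (fun y => y 3) x = b * (x 4 - x 5) := by
  simp [pb_Ham_neg_sq, pd_coord]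

theorem pb_Ham_p2 : pb (Ham b (-b ^ 2)) (fun y => y 4) x = b * (x 5 - x 3) := by
  simp [pb_Ham_neg_sq, pd_coord]

theorem pb_Ham_p3 : pb (Ham b (-b ^ 2)) (fun y => y 5) x = b * (x 3 - x 4) := by
  simp [pb_Ham_neg_sq, pd_coord]

theorem pb_Ham_L1 : pb (Ham b (-b ^ 2)) L1 x = b * (L2 x - L3 x) := by
  unfold L1 L2 L3
  simp (disch := fun_prop) only [pb_Ham_neg_sq, pd_sub, pd_mul, pd_coord, Pi.single_apply,
    Fin.reduceEq, reduceIte]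
  ring

theorem pb_Ham_L2 : pb (Ham b (-b ^ 2)) L2 x = b * (L3 x - L1 x) := by
  unfold L1 L2 L3
  simp (disch := fun_prop) only [pb_Ham_neg_sq, pd_sub, pd_mul, pd_coord, Pi.single_apply,
    Fin.reduceEq, reduceIte]
  ring

theorem pb_Ham_L3 : pb (Ham b (-b ^ 2)) L3 x = b * (L1 x - L2 x) := by
  unfold L1 L2 L3
  simp (disch := fun_prop) only [pb_Ham_neg_sq, pd_sub, pd_mul, pd_coord, Pi.single_apply,
    Fin.reduceEq, reduceIte]
  ring

end BracketsWithHam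

/-- If k + b² = 0 then J4 is a constant of motion: {H, J4} = 0. -/
theorem stmt15 (b k : ℝ) (hk : k = -b^2) (x : Fin 6 → ℝ) :
    pb (Ham b k) J4w x = 0 := by
  subst hk
  unfold J4w
  simp (disch := fun_prop) only [pb_add_right, pb_mul_right, pb_sub_right, pb_Ham_L1, pb_Ham_L2,
    pb_Ham_L3, pb_Ham_p1, pb_Ham_p2, pb_Ham_p3]
  ring
end
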